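/- arXiv:2305.11807 — 2 statements merged into one kernel-verified Lean document; each statement's English description precedes it below -/
import Mathlib

section
/- Suppose for each i ∈ [m], ℓ_i(θ) = z(h_θ(x_i)) + c·y_i·h_θ(x_i) with private label ỹ_i in place of y_i defining ℓ̃_i. Let L(θ) = (1/m)Σℓ_i(θ) + λ‖θ‖² and L̃(θ) = (1/m)Σℓ̃_i(θ) + λ‖θ‖², both λ-strongly convex with minimizers θ* and θ̃. If |ỹ_i - ŷ_i| ≤ 1 for all i and g_i = max_θ ‖∇_θ h_θ(x_i)‖ exists, then ‖θ̃ - θ*‖ ≤ (|c|/(mλ))·Σ_{i=1}^m |ỹ_i - ŷ_i|·g_i. -/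
/-!
Adding the quadratic-growth inequalities of the two strongly convex objectives at their
minimizers gives `λ ‖θ̃ - θ*‖² ≤ Δ(θ*) - Δ(θ̃)` for the gap `Δ = L̃ - L`, which is the linear
combination `(c/m) Σ (ỹ_i - ŷ_i) h_θ(x_i)`. Each `θ ↦ h_θ(x_i)` is `g_i`-Lipschitz by the mean
value theorem, so the right-hand side is at most `(|c|/m) Σ |ỹ_i - ŷ_i| g_i ‖θ̃ - θ*‖`.
-/

open Filter Topology Set

lemma StrongConvexOn.add_mul_sq_norm_sub_le_of_isMinOn {E : Type*} [NormedAddCommGroup E]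
    [NormedSpace ℝ E] {s : Set E} {μ : ℝ} {f : E → ℝ} {a x : E}
    (hf : StrongConvexOn s μ f) (ha : a ∈ s) (hmin : IsMinOn f s a) (hx : x ∈ s) :
    f a + μ / 2 * ‖x - a‖ ^ 2 ≤ f x := by
  have hsegment : ∀ t ∈ Ioo (0 : ℝ) 1, f a + (1 - t) * (μ / 2 * ‖x - a‖ ^ 2) ≤ f x := by
    intro t ⟨ht₀, ht₁⟩
    have hconv := hf.2 hx ha ht₀.le (sub_nonneg.2 ht₁.le) (add_sub_cancel t 1)
    have hle := hmin (hf.1 hx ha ht₀.le (sub_nonneg.2 ht₁.le) (add_sub_cancel t 1))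
    simp only [smul_eq_mul, mem_ofPred_eq] at hconv hle
    nlinarith
  have hlim : Tendsto (fun t : ℝ => f a + (1 - t) * (μ / 2 * ‖x - a‖ ^ 2)) (𝓝[>] 0)
      (𝓝 (f a + μ / 2 * ‖x - a‖ ^ 2)) :=
    tendsto_nhdsWithin_of_tendsto_nhds <|
      (by fun_prop : Continuous fun t : ℝ => f a + (1 - t) * (μ / 2 * ‖x - a‖ ^ 2)).tendsto'
        0 _ (by simp)
  exact le_of_tendsto hlim <| eventually_of_mem (Ioo_mem_nhdsGT one_pos) hsegment

lemma StrongConvexOn.norm_sub_le_of_isMinOn {E : Type*} [NormedAddCommGroup E]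
    [NormedSpace ℝ E] {s : Set E} {μ C : ℝ} {f g : E → ℝ} {a b : E} (hμ : 0 < μ) (hC : 0 ≤ C)
    (hf : StrongConvexOn s μ f) (hg : StrongConvexOn s μ g) (ha : a ∈ s) (hb : b ∈ s)
    (hfa : IsMinOn f s a) (hgb : IsMinOn g s b)
    (hgap : (g a - f a) - (g b - f b) ≤ C * ‖b - a‖) :
    ‖b - a‖ ≤ C / μ := by
  have hfb := hf.add_mul_sq_norm_sub_le_of_isMinOn ha hfa hb
  have hga := hg.add_mul_sq_norm_sub_le_of_isMinOn hb hgb ha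
  rw [norm_sub_rev] at hga
  have hsq : μ * ‖b - a‖ ^ 2 ≤ C * ‖b - a‖ := by linarith
  rw [le_div_iff₀ hμ]
  nlinarith [norm_nonneg (b - a)]

lemma abs_sub_le_of_norm_gradient_le {F : Type*} [NormedAddCommGroup F] [InnerProductSpace ℝ F]
    [CompleteSpace F] {f : F → ℝ} {G : ℝ} (hf : Differentiable ℝ f)
    (hG : ∀ x, ‖gradient f x‖ ≤ G) (x y : F) :
    |f x - f y| ≤ G * ‖x - y‖ := by
  have hfderiv : ∀ x, ‖fderiv ℝ f x‖ ≤ G := fun x => by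
    simpa [gradient] using hG x
  simpa using convex_univ.norm_image_sub_le_of_norm_fderiv_le (fun x _ => hf x)
    (fun x _ => hfderiv x) (mem_univ y) (mem_univ x)

lemma abs_sum_mul_sub_sum_mul_le {ι E : Type*} [SeminormedAddCommGroup E] (s : Finset ι)
    (a G : ι → ℝ) (f : ι → E → ℝ) (hf : ∀ i ∈ s, ∀ x y, |f i x - f i y| ≤ G i * ‖x - y‖)
    (x y : E) :
    |∑ i ∈ s, a i * f i x - ∑ i ∈ s, a i * f i y| ≤ (∑ i ∈ s, |a i| * G i) * ‖x - y‖ := by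
  rw [← Finset.sum_sub_distrib, Finset.sum_mul]
  refine (Finset.abs_sum_le_sum_abs _ _).trans (Finset.sum_le_sum fun i hi => ?_)
  rw [← mul_sub, abs_mul, mul_assoc]
  exact mul_le_mul_of_nonneg_left (hf i hi x y) (abs_nonneg _)

theorem stmt_7_general {d m : ℕ} {X : Type*}
    (lam c : ℝ) (hlam : 0 < lam)
    (h : EuclideanSpace ℝ (Fin d) → X → ℝ) (z : ℝ → ℝ)
    (x : Fin m → X) (yh yt : Fin m → ℝ) (g : Fin m → ℝ)
    (hdiff : ∀ i, Differentiable ℝ (fun θ => h θ (x i)))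
    (hg : ∀ i, IsGreatest
      (Set.range fun θ : EuclideanSpace ℝ (Fin d) =>
        ‖gradient (fun θ' => h θ' (x i)) θ‖) (g i))
    (L Lt : EuclideanSpace ℝ (Fin d) → ℝ)
    (hLdef : L = fun θ =>
      (1 / (m : ℝ)) * ∑ i, (z (h θ (x i)) + c * yh i * h θ (x i)) + lam * ‖θ‖ ^ 2)
    (hLtdef : Lt = fun θ =>
      (1 / (m : ℝ)) * ∑ i, (z (h θ (x i)) + c * yt i * h θ (x i)) + lam * ‖θ‖ ^ 2)
    (hLsc : ConvexOn ℝ Set.univ (fun θ => L θ - lam / 2 * ‖θ‖ ^ 2))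
    (hLtsc : ConvexOn ℝ Set.univ (fun θ => Lt θ - lam / 2 * ‖θ‖ ^ 2))
    (θs θt : EuclideanSpace ℝ (Fin d))
    (hθs : ∀ θ, L θs ≤ L θ) (hθt : ∀ θ, Lt θt ≤ Lt θ) :
    ‖θt - θs‖ ≤ |c| / (m * lam) * ∑ i, |yt i - yh i| * g i := by
  set a : Fin m → ℝ := fun i => c / m * (yt i - yh i)
  have hgap : ∀ θ, Lt θ - L θ = ∑ i, a i * h θ (x i) := fun θ => by
    rw [hLtdef, hLdef]
    dsimp only
    rw [add_sub_add_right_eq_sub, ← mul_sub, ← Finset.sum_sub_distrib, Finset.mul_sum]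
    exact Finset.sum_congr rfl fun i _ => by ring
  have hlip : ∀ i ∈ Finset.univ, ∀ θ θ', |h θ (x i) - h θ' (x i)| ≤ g i * ‖θ - θ'‖ :=
    fun i _ => abs_sub_le_of_norm_gradient_le (hdiff i) fun θ => (hg i).2 ⟨θ, rfl⟩
  have hg0 : ∀ i, 0 ≤ g i := fun i => by
    obtain ⟨θ, hθ⟩ := (hg i).1
    exact hθ ▸ norm_nonneg _
  have hclose := StrongConvexOn.norm_sub_le_of_isMinOn hlam
    (Finset.sum_nonneg fun i _ => mul_nonneg (abs_nonneg (a i)) (hg0 i))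
    (strongConvexOn_iff_convex.2 hLsc) (strongConvexOn_iff_convex.2 hLtsc)
    (mem_univ θs) (mem_univ θt) (isMinOn_univ_iff.2 hθs) (isMinOn_univ_iff.2 hθt)
    (by
      rw [hgap, hgap, norm_sub_rev]
      exact (le_abs_self _).trans (abs_sum_mul_sub_sum_mul_le _ a g _ hlip θs θt))
  refine hclose.trans_eq ?_
  simp only [a, abs_mul, abs_div, Nat.abs_cast, Finset.mul_sum, Finset.sum_div]
  exact Finset.sum_congr rfl fun i _ => by ring

/-- Deterministic model-deviation bound (core of Theorem 2): for decomposable losses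
`ℓ_i(θ) = z(h_θ(x_i)) + c·y_i·h_θ(x_i)`, the regularized empirical risks `L` (with labels
`ŷ`) and `L̃` (with private labels `ỹ`), both `λ`-strongly convex with minimizers `θ*`
and `θ̃`, satisfy `‖θ̃ - θ*‖ ≤ (|c|/(mλ))·Σ_i |ỹ_i - ŷ_i|·g_i`, where
`g_i = max_θ ‖∇_θ h_θ(x_i)‖`. -/
theorem stmt_7 {d m : ℕ} (hm : 0 < m) {X : Type*}
    (lam c : ℝ) (hlam : 0 < lam)
    (h : EuclideanSpace ℝ (Fin d) → X → ℝ) (z : ℝ → ℝ)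
    (x : Fin m → X) (yh yt : Fin m → ℝ) (g : Fin m → ℝ)
    (hdiff : ∀ i, Differentiable ℝ (fun θ => h θ (x i)))
    (hg : ∀ i, IsGreatest
      (Set.range fun θ : EuclideanSpace ℝ (Fin d) =>
        ‖gradient (fun θ' => h θ' (x i)) θ‖) (g i))
    (hflip : ∀ i, |yt i - yh i| ≤ 1)
    (L Lt : EuclideanSpace ℝ (Fin d) → ℝ)
    (hLdef : L = fun θ =>
      (1 / (m : ℝ)) * ∑ i, (z (h θ (x i)) + c * yh i * h θ (x i)) + lam * ‖θ‖ ^ 2)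
    (hLtdef : Lt = fun θ =>
      (1 / (m : ℝ)) * ∑ i, (z (h θ (x i)) + c * yt i * h θ (x i)) + lam * ‖θ‖ ^ 2)
    (hLd : Differentiable ℝ L) (hLtd : Differentiable ℝ Lt)
    (hLsc : ConvexOn ℝ Set.univ (fun θ => L θ - lam / 2 * ‖θ‖ ^ 2))
    (hLtsc : ConvexOn ℝ Set.univ (fun θ => Lt θ - lam / 2 * ‖θ‖ ^ 2))
    (θs θt : EuclideanSpace ℝ (Fin d))
    (hθs : ∀ θ, L θs ≤ L θ) (hθt : ∀ θ, Lt θt ≤ Lt θ) :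
    ‖θt - θs‖ ≤ |c| / (m * lam) * ∑ i, |yt i - yh i| * g i :=
  stmt_7_general lam c hlam h z x yh yt g hdiff hg L Lt hLdef hLtdef hLsc hLtsc θs θt hθs hθt
end

section
/- For a logistic regression classifier, under the assumptions of Theorem 2 of the paper, the expected model deviation satisfies E[‖θ̃ - θ*‖] ≤ (1/(mλ))·Σ_{i=1}^m p_i·‖x_i‖. -/
open MeasureTheory
open scoped RealInnerProductSpace BigOperators

/-- The logistic sigmoid `σ(t) = 1/(1 + e^{-t})`. -/
noncomputable def sigmoid (t : ℝ) : ℝ := 1 / (1 + Real.exp (-t))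

/-- Binary cross-entropy loss of logistic regression at sample `(x, y)`. -/
noncomputable def logLoss {d : ℕ} (θ x : EuclideanSpace ℝ (Fin d)) (y : ℝ) : ℝ :=
  -(y * Real.log (sigmoid ⟪θ, x⟫)) - (1 - y) * Real.log (1 - sigmoid ⟪θ, x⟫)

/-!
The logistic loss is affine in the label, so flipping labels changes the regularized risk by a
linear functional `θ ↦ ⟪v, θ⟫` with `‖v‖ ≤ (1/m) Σ_i |ŷ_i - ỹ_i| ‖x_i‖`. Two `λ`-strongly convex
functions differing by a linear functional `⟪v, ·⟫` have minimizers at distance at most `‖v‖ / λ`: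
adding the quadratic growth inequalities at both minimizers gives `λ ‖θ̃ - θ*‖² ≤ ⟪v, θ* - θ̃⟫`.
Taking expectations, `E |ŷ_i - ỹ_i| = p_i`.
-/

open Set Filter Topology

section QuadraticGrowth

variable {E : Type*} [NormedAddCommGroup E]

lemma UniformConvexOn.add_le_of_isMinOn [NormedSpace ℝ E] {s : Set E} {φ : ℝ → ℝ} {f : E → ℝ}
    (hf : UniformConvexOn s φ f) {x₀ : E} (hmin : IsMinOn f s x₀) (hx₀ : x₀ ∈ s) {y : E}
    (hy : y ∈ s) : f x₀ + φ ‖x₀ - y‖ ≤ f y := by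
  have hsegment : ∀ t ∈ Ioo (0 : ℝ) 1, f x₀ + (1 - t) * φ ‖x₀ - y‖ ≤ f y := by
    rintro t ⟨ht₀, ht₁⟩
    have hconv := hf.2 hx₀ hy (sub_nonneg.2 ht₁.le) ht₀.le (sub_add_cancel 1 t)
    have hle := isMinOn_iff.1 hmin _ (hf.1 hx₀ hy (sub_nonneg.2 ht₁.le) ht₀.le (sub_add_cancel 1 t))
    simp only [smul_eq_mul] at hconv
    nlinarith
  have hlim : Tendsto (fun t : ℝ ↦ f x₀ + (1 - t) * φ ‖x₀ - y‖) (𝓝[>] 0)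
      (𝓝 (f x₀ + (1 - 0) * φ ‖x₀ - y‖)) :=
    ((by fun_prop : Continuous fun t : ℝ ↦ f x₀ + (1 - t) * φ ‖x₀ - y‖).tendsto 0).mono_left
      nhdsWithin_le_nhds
  rw [sub_zero, one_mul] at hlim
  exact le_of_tendsto hlim (eventually_of_mem (Ioo_mem_nhdsGT one_pos) hsegment)

lemma StrongConvexOn.norm_sub_le_of_isMinOn_s12 [InnerProductSpace ℝ E] {s : Set E} {m : ℝ}
    (hm : 0 < m) {f g : E → ℝ} (hf : StrongConvexOn s m f) (hg : StrongConvexOn s m g)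
    {a b : E} (ha : IsMinOn f s a) (hb : IsMinOn g s b) (has : a ∈ s) (hbs : b ∈ s)
    (v : E) (c : ℝ) (hgf : ∀ x, g x = f x + ⟪v, x⟫ + c) : ‖b - a‖ ≤ ‖v‖ / m := by
  have hfa : f a + m / 2 * ‖a - b‖ ^ 2 ≤ f b := UniformConvexOn.add_le_of_isMinOn hf ha has hbs
  have hgb : g b + m / 2 * ‖b - a‖ ^ 2 ≤ g a := UniformConvexOn.add_le_of_isMinOn hg hb hbs has
  have hinner : ⟪v, a - b⟫ ≤ ‖v‖ * ‖b - a‖ := by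
    rw [norm_sub_rev b a]; exact real_inner_le_norm v (a - b)
  rw [norm_sub_rev] at hgb hinner
  rw [hgf, hgf] at hgb
  have hsq : m * ‖a - b‖ * ‖a - b‖ ≤ ‖v‖ * ‖a - b‖ := by
    rw [inner_sub_right] at hinner
    linarith
  rw [norm_sub_rev, le_div_iff₀' hm]
  rcases (norm_nonneg (a - b)).eq_or_lt with h | h
  · rw [← h, mul_zero]; exact norm_nonneg v
  · exact le_of_mul_le_mul_right hsq h

end QuadraticGrowth

lemma logLoss_sub {d : ℕ} (θ x : EuclideanSpace ℝ (Fin d)) (a b : ℝ) :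
    logLoss θ x a - logLoss θ x b = (b - a) * ⟪θ, x⟫ := by
  set t := ⟪θ, x⟫ with ht
  have hexp : 0 < Real.exp (-t) := Real.exp_pos _
  have hden : 0 < 1 + Real.exp (-t) := by linarith
  have hlog : Real.log (sigmoid t) = -Real.log (1 + Real.exp (-t)) := by
    rw [sigmoid, one_div, Real.log_inv]
  have hlog_one_sub : Real.log (1 - sigmoid t) = -t - Real.log (1 + Real.exp (-t)) := by
    have : 1 - sigmoid t = Real.exp (-t) / (1 + Real.exp (-t)) := by
      rw [sigmoid]; field_simp; ring
    rw [this, Real.log_div hexp.ne' hden.ne', Real.log_exp]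
  simp only [logLoss, ← ht, hlog, hlog_one_sub]
  ring

lemma sum_logLoss_eq_add_inner {d : ℕ} {ι : Type*} [Fintype ι] (θ : EuclideanSpace ℝ (Fin d))
    (x : ι → EuclideanSpace ℝ (Fin d)) (y y' : ι → ℝ) :
    ∑ i, logLoss θ (x i) (y' i) = ∑ i, logLoss θ (x i) (y i) + ⟪∑ i, (y i - y' i) • x i, θ⟫ := by
  rw [sum_inner, ← sub_eq_iff_eq_add', ← Finset.sum_sub_distrib]
  refine Finset.sum_congr rfl fun i _ ↦ ?_
  rw [logLoss_sub, real_inner_smul_left, real_inner_comm]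

theorem stmt_12_general {d m : ℕ}
    {Ω : Type*} [MeasurableSpace Ω] (μ : Measure Ω)
    (lam : ℝ) (hlam : 0 < lam)
    (x : Fin m → EuclideanSpace ℝ (Fin d))
    (yh : Fin m → ℝ) (yt : Ω → Fin m → ℝ) (p : Fin m → ℝ)
    (L : EuclideanSpace ℝ (Fin d) → ℝ)
    (Lt : Ω → EuclideanSpace ℝ (Fin d) → ℝ)
    (hLdef : L = fun θ => (1 / (m : ℝ)) * ∑ i, logLoss θ (x i) (yh i) + lam * ‖θ‖ ^ 2)
    (hLtdef : ∀ ω, Lt ω = fun θ =>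
      (1 / (m : ℝ)) * ∑ i, logLoss θ (x i) (yt ω i) + lam * ‖θ‖ ^ 2)
    (hLsc : ConvexOn ℝ Set.univ (fun θ => L θ - lam / 2 * ‖θ‖ ^ 2))
    (hLtsc : ∀ ω, ConvexOn ℝ Set.univ (fun θ => Lt ω θ - lam / 2 * ‖θ‖ ^ 2))
    (θs : EuclideanSpace ℝ (Fin d)) (θt : Ω → EuclideanSpace ℝ (Fin d))
    (hθs : ∀ θ, L θs ≤ L θ) (hθt : ∀ ω θ, Lt ω (θt ω) ≤ Lt ω θ)
    (hflipint : ∀ i, Integrable (fun ω => |yh i - yt ω i|) μ)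
    (hp : ∀ i, ∫ ω, |yh i - yt ω i| ∂μ = p i) :
    (∫ ω, ‖θt ω - θs‖ ∂μ) ≤ 1 / (m * lam) * ∑ i, p i * ‖x i‖ := by
  set v : Ω → EuclideanSpace ℝ (Fin d) := fun ω ↦ (1 / (m : ℝ)) • ∑ i, (yh i - yt ω i) • x i
  have hv : ∀ ω, ‖v ω‖ ≤ 1 / m * ∑ i, |yh i - yt ω i| * ‖x i‖ := fun ω ↦ by
    rw [norm_smul, Real.norm_of_nonneg (by positivity)]
    gcongr
    refine (norm_sum_le _ _).trans_eq (Finset.sum_congr rfl fun i _ ↦ ?_)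
    rw [norm_smul, Real.norm_eq_abs]
  have hbound : ∀ ω, ‖θt ω - θs‖ ≤ 1 / (m * lam) * ∑ i, |yh i - yt ω i| * ‖x i‖ := fun ω ↦
    calc ‖θt ω - θs‖ ≤ ‖v ω‖ / lam :=
          StrongConvexOn.norm_sub_le_of_isMinOn_s12 hlam (strongConvexOn_iff_convex.2 hLsc)
            (strongConvexOn_iff_convex.2 (hLtsc ω)) (isMinOn_univ_iff.2 hθs)
            (isMinOn_univ_iff.2 (hθt ω)) (mem_univ _) (mem_univ _) (v ω) 0 fun θ ↦ by
              simp only [hLdef, hLtdef, sum_logLoss_eq_add_inner θ x yh (yt ω), v,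
                real_inner_smul_left]
              ring
      _ ≤ (1 / m * ∑ i, |yh i - yt ω i| * ‖x i‖) / lam := by gcongr; exact hv ω
      _ = _ := by ring
  have hweighted_int : ∀ i ∈ Finset.univ, Integrable (fun ω ↦ |yh i - yt ω i| * ‖x i‖) μ :=
    fun i _ ↦ (hflipint i).mul_const _
  calc ∫ ω, ‖θt ω - θs‖ ∂μ
      ≤ ∫ ω, 1 / (m * lam) * ∑ i, |yh i - yt ω i| * ‖x i‖ ∂μ :=
        integral_mono_of_nonneg (.of_forall fun _ ↦ norm_nonneg _)
          ((integrable_finsetSum _ hweighted_int).const_mul _) (.of_forall hbound)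
    _ = 1 / (m * lam) * ∑ i, p i * ‖x i‖ := by
        simp only [integral_const_mul, integral_finsetSum _ hweighted_int, integral_mul_const, hp]

/-- Corollary 1: for a logistic regression student model trained on public samples `x_i`
with clean voted labels `ŷ_i` (risk `L`, minimizer `θ*`) and random noisy labels `ỹ_i`
(risk `L̃`, minimizer `θ̃`), where each flip `|ŷ_i - ỹ_i|` is Bernoulli with flipping
probability `p_i`, the expected model deviation satisfies
`E[‖θ̃ - θ*‖] ≤ (1/(mλ))·Σ_i p_i·‖x_i‖`. -/
theorem stmt_12 {d m : ℕ} (hm : 0 < m)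
    {Ω : Type*} [MeasurableSpace Ω] (μ : Measure Ω) [IsProbabilityMeasure μ]
    (lam : ℝ) (hlam : 0 < lam)
    (x : Fin m → EuclideanSpace ℝ (Fin d))
    (yh : Fin m → ℝ) (yt : Ω → Fin m → ℝ) (p : Fin m → ℝ)
    (L : EuclideanSpace ℝ (Fin d) → ℝ)
    (Lt : Ω → EuclideanSpace ℝ (Fin d) → ℝ)
    (hLdef : L = fun θ => (1 / (m : ℝ)) * ∑ i, logLoss θ (x i) (yh i) + lam * ‖θ‖ ^ 2)
    (hLtdef : ∀ ω, Lt ω = fun θ =>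
      (1 / (m : ℝ)) * ∑ i, logLoss θ (x i) (yt ω i) + lam * ‖θ‖ ^ 2)
    (hLsc : ConvexOn ℝ Set.univ (fun θ => L θ - lam / 2 * ‖θ‖ ^ 2))
    (hLtsc : ∀ ω, ConvexOn ℝ Set.univ (fun θ => Lt ω θ - lam / 2 * ‖θ‖ ^ 2))
    (θs : EuclideanSpace ℝ (Fin d)) (θt : Ω → EuclideanSpace ℝ (Fin d))
    (hθs : ∀ θ, L θs ≤ L θ) (hθt : ∀ ω θ, Lt ω (θt ω) ≤ Lt ω θ)
    (hbernoulli : ∀ i ω, |yh i - yt ω i| = 0 ∨ |yh i - yt ω i| = 1)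
    (hflipint : ∀ i, Integrable (fun ω => |yh i - yt ω i|) μ)
    (hp : ∀ i, ∫ ω, |yh i - yt ω i| ∂μ = p i)
    (hint : Integrable (fun ω => ‖θt ω - θs‖) μ) :
    (∫ ω, ‖θt ω - θs‖ ∂μ) ≤ 1 / (m * lam) * ∑ i, p i * ‖x i‖ :=
  stmt_12_general μ lam hlam x yh yt p L Lt hLdef hLtdef hLsc hLtsc θs θt hθs hθt hflipint hp
end
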